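/- (Kernel grid-average approximation, used in the proof of Theorem 1; case q = 1.) Let K be a probability density on ℝ, symmetric about 0, with bounded derivative, finite total variation, ∫x²K(x)dx < ∞, and ∫_y^∞ K(x)dx ≤ M e^{−ay²} for some M, a > 0 and all sufficiently large y. Let w_j = (2j−1)/(2m), j = 1,…,m, be the evenly spaced grid on [0,1]. Then for every δ ∈ (0, 1/2) there exist constants C > 0, a' > 0 and h₀ > 0 such that for all h ∈ (0, h₀) and all m ≥ 1, sup_{x ∈ [δ, 1−δ]} | m^{−1}Σ_{j=1}^m h^{−1}K(h^{−1}(x − w_j)) − 1 | ≤ C(h^{−1}m^{−1} + e^{−a'/h²}). -/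

import Mathlib

/-!
The grid average is the midpoint Riemann sum, scaled by `h⁻¹`, of `w ↦ K((x - w)/h)` on
`[0, 1]`. On a cell of length `1/m` the midpoint rule errs by at most `1/m` times the
variation of the integrand on that cell, and these variations add up to at most the total
variation of `K`: this gives the `h⁻¹m⁻¹` term. The exact integral is `∫_{(x-1)/h}^{x/h} K`, which by
symmetry is `1` minus two tails of `K` beyond `δ/h`, each bounded by `M e^{-aδ²/h²}` once
`δ/h ≥ y₀`.
-/

open MeasureTheory Set

noncomputable section

namespace AHM

theorem BoundedVariationOn.intervalIntegrable {f : ℝ → ℝ} {a b : ℝ}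
    (hf : BoundedVariationOn f (uIcc a b)) : IntervalIntegrable f volume a b := by
  obtain ⟨p, q, hp, hq, rfl⟩ := hf.locallyBoundedVariationOn.exists_monotoneOn_sub_monotoneOn
  exact hp.intervalIntegrable.sub hq.intervalIntegrable

theorem abs_mul_sub_intervalIntegral_le {g : ℝ → ℝ} {a b c : ℝ} (hc : c ∈ Icc a b)
    (hg : IntervalIntegrable g volume a b) (hV : eVariationOn g (Icc a b) ≠ ⊤) :
    |(b - a) * g c - ∫ w in a..b, g w| ≤ (b - a) * (eVariationOn g (Icc a b)).toReal := by
  have hab : a ≤ b := hc.1.trans hc.2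
  have hosc : ∀ w ∈ uIoc a b, ‖g c - g w‖ ≤ (eVariationOn g (Icc a b)).toReal := by
    intro w hw
    rw [uIoc_of_le hab] at hw
    rw [← dist_eq_norm, dist_edist]
    exact ENNReal.toReal_mono hV (eVariationOn.edist_le g hc (Ioc_subset_Icc_self hw))
  calc |(b - a) * g c - ∫ w in a..b, g w|
      = |∫ w in a..b, (g c - g w)| := by
        rw [intervalIntegral.integral_sub intervalIntegrable_const hg,
          intervalIntegral.integral_const, smul_eq_mul]
    _ ≤ (eVariationOn g (Icc a b)).toReal * |b - a| :=
        intervalIntegral.norm_integral_le_of_norm_le_const hosc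
    _ = (b - a) * (eVariationOn g (Icc a b)).toReal := by
        rw [abs_of_nonneg (sub_nonneg.2 hab), mul_comm]

theorem abs_midpoint_sum_sub_integral_le {g : ℝ → ℝ} (hg : BoundedVariationOn g (Icc 0 1))
    {m : ℕ} (hm : 0 < m) :
    |(m : ℝ)⁻¹ * (∑ j ∈ Finset.range m, g ((2 * (j : ℝ) + 1) / (2 * m)))
        - ∫ w in (0:ℝ)..1, g w|
      ≤ (m : ℝ)⁻¹ * (eVariationOn g (Icc 0 1)).toReal := by
  have hm' : (0 : ℝ) < m := Nat.cast_pos.2 hm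
  set a : ℕ → ℝ := fun j => j / m with ha
  have ha_mono : Monotone a := fun i j hij => by
    simp only [ha]; gcongr
  have ha0 : a 0 = 0 := by simp [ha]
  have ham : a m = 1 := by simp [ha, hm'.ne']
  have hcell : ∀ j < m, Icc (a j) (a (j + 1)) ⊆ Icc 0 1 := fun j hj =>
    Icc_subset_Icc (ha0 ▸ ha_mono (Nat.zero_le _)) (ham ▸ ha_mono hj)
  have hcell_bv : ∀ j < m, BoundedVariationOn g (Icc (a j) (a (j + 1))) := fun j hj =>
    hg.mono (hcell j hj)
  have hcell_int : ∀ j < m, IntervalIntegrable g volume (a j) (a (j + 1)) := fun j hj =>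
    BoundedVariationOn.intervalIntegrable (by
      rw [uIcc_of_le (ha_mono j.le_succ)]; exact hcell_bv j hj)
  have hmid : ∀ j, (2 * (j : ℝ) + 1) / (2 * m) ∈ Icc (a j) (a (j + 1)) := fun j => by
    simp only [ha, mem_Icc, Nat.cast_succ]
    constructor <;> rw [div_le_div_iff₀ (by positivity) (by positivity)] <;> nlinarith
  have hlen : ∀ j, a (j + 1) - a j = (m : ℝ)⁻¹ := fun j => by
    simp only [ha, Nat.cast_succ]; field_simp; ring
  have hsplit :
      ∫ w in (0:ℝ)..1, g w = ∑ j ∈ Finset.range m, ∫ w in a j..a (j + 1), g w := by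
    rw [intervalIntegral.sum_integral_adjacent_intervals hcell_int, ha0, ham]
  calc |(m : ℝ)⁻¹ * (∑ j ∈ Finset.range m, g ((2 * (j : ℝ) + 1) / (2 * m)))
        - ∫ w in (0:ℝ)..1, g w|
      = |∑ j ∈ Finset.range m, ((a (j + 1) - a j) * g ((2 * (j : ℝ) + 1) / (2 * m))
          - ∫ w in a j..a (j + 1), g w)| := by
        simp only [hsplit, Finset.sum_sub_distrib, hlen, Finset.mul_sum]
    _ ≤ ∑ j ∈ Finset.range m,
          (a (j + 1) - a j) * (eVariationOn g (Icc (a j) (a (j + 1)))).toReal :=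
        (Finset.abs_sum_le_sum_abs _ _).trans <| Finset.sum_le_sum fun j hj =>
          abs_mul_sub_intervalIntegral_le (hmid j) (hcell_int j (Finset.mem_range.1 hj))
            (hcell_bv j (Finset.mem_range.1 hj))
    _ = (m : ℝ)⁻¹ * (eVariationOn g (Icc 0 1)).toReal := by
        simp only [hlen, ← Finset.mul_sum]
        rw [← ENNReal.toReal_sum fun j hj => hcell_bv j (Finset.mem_range.1 hj),
          eVariationOn.sum' g ha_mono, ha0, ham]

theorem intervalIntegral_comp_sub_div (K : ℝ → ℝ) (x : ℝ) {h : ℝ} (hh : h ≠ 0) :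
    ∫ w in (0:ℝ)..1, K ((x - w) / h) = h * ∫ u in (x - 1) / h..x / h, K u := by
  rw [intervalIntegral.integral_comp_sub_left (fun u => K (u / h)), sub_zero,
    intervalIntegral.integral_comp_div K hh, smul_eq_mul]

theorem intervalIntegral_eq_integral_sub_tails {f : ℝ → ℝ} (hf : Integrable f)
    (hsymm : ∀ x, f (-x) = f x) (a b : ℝ) :
    ∫ u in a..b, f u = (∫ u, f u) - (∫ u in Ioi (-a), f u) - ∫ u in Ioi b, f u := by
  have hleft : ∫ u in Iic a, f u = ∫ u in Ioi (-a), f u := by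
    simp only [← integral_comp_neg_Iic, hsymm]
  have hsplit := intervalIntegral.integral_Iic_add_Ioi (b := b) hf.integrableOn hf.integrableOn
  rw [← intervalIntegral.integral_Iic_sub_Iic hf.integrableOn hf.integrableOn]
  linarith

theorem abs_kernel_mass_sub_one_le {K : ℝ → ℝ} (hK0 : ∀ x, 0 ≤ K x) (hKint : Integrable K)
    (hK1 : ∫ x, K x = 1) (hKsymm : ∀ x, K (-x) = K x) {δ h x B : ℝ} (hh : 0 < h)
    (hx : x ∈ Icc δ (1 - δ)) (htail : ∀ y, δ / h ≤ y → ∫ u in Ioi y, K u ≤ B) :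
    |h⁻¹ * (∫ w in (0:ℝ)..1, K ((x - w) / h)) - 1| ≤ 2 * B := by
  have htail_nonneg : ∀ y, 0 ≤ ∫ u in Ioi y, K u := fun y =>
    setIntegral_nonneg measurableSet_Ioi fun u _ => hK0 u
  have hright := htail (x / h) (by gcongr; exact hx.1)
  have hleft := htail (-((x - 1) / h)) (by rw [← neg_div, neg_sub]; gcongr; linarith [hx.2])
  rw [intervalIntegral_comp_sub_div K x hh.ne', inv_mul_cancel_left₀ hh.ne',
    intervalIntegral_eq_integral_sub_tails hKint hKsymm, hK1, abs_le]
  constructor <;> linarith [htail_nonneg (x / h), htail_nonneg (-((x - 1) / h))]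

theorem le_exp_of_gaussian_tail {T : ℝ → ℝ} {M a y₀ δ h : ℝ}
    (hT : ∀ y, y₀ ≤ y → T y ≤ M * Real.exp (-a * y ^ 2)) (hM : 0 ≤ M) (ha : 0 ≤ a)
    (hδ : 0 < δ) (hh : 0 < h) (hh₀ : h < δ / (|y₀| + 1)) :
    ∀ y, δ / h ≤ y → T y ≤ M * Real.exp (-(a * δ ^ 2) / h ^ 2) := by
  intro y hy
  have hy₀ : y₀ < δ / h := by
    rw [lt_div_iff₀ hh]
    rw [lt_div_iff₀ (by positivity)] at hh₀
    nlinarith [le_abs_self y₀, abs_nonneg y₀]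
  refine (hT y (hy₀.le.trans hy)).trans ?_
  gcongr
  rw [neg_div, mul_div_assoc, ← div_pow, neg_mul, neg_le_neg_iff]
  gcongr

theorem statement10_general (K : ℝ → ℝ)
    (hK0 : ∀ x, 0 ≤ K x) (hKint : Integrable K) (hK1 : (∫ x, K x) = 1)
    (hKsymm : ∀ x, K (-x) = K x)
    (hKbv : BoundedVariationOn K univ)
    (hKtail : ∃ M a y₀ : ℝ, 0 < M ∧ 0 < a ∧
      ∀ y : ℝ, y₀ ≤ y → (∫ x in Ioi y, K x) ≤ M * Real.exp (-a * y ^ 2)) :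
    ∀ δ ∈ Ioo (0:ℝ) (1/2),
      ∃ C a' h₀ : ℝ, 0 < C ∧ 0 < a' ∧ 0 < h₀ ∧
        ∀ h ∈ Ioo (0:ℝ) h₀, ∀ m : ℕ, 1 ≤ m → ∀ x ∈ Icc δ (1 - δ),
          |(m : ℝ)⁻¹ * (∑ j ∈ Finset.range m,
              K ((x - (2 * (j : ℝ) + 1) / (2 * m)) / h) / h) - 1|
            ≤ C * (h⁻¹ * (m : ℝ)⁻¹ + Real.exp (-a' / h ^ 2)) := by
  obtain ⟨M, a, y₀, hM, ha, htail⟩ := hKtail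
  rintro δ ⟨hδ, -⟩
  set V := (eVariationOn K univ).toReal
  refine ⟨V + 2 * M + 1, a * δ ^ 2, δ / (|y₀| + 1), by positivity, by positivity, by positivity,
    ?_⟩
  rintro h ⟨hh, hh₀⟩ m hm x hx
  set g : ℝ → ℝ := fun w => K ((x - w) / h)
  set E := Real.exp (-(a * δ ^ 2) / h ^ 2)
  have hgV : eVariationOn g (Icc 0 1) ≤ eVariationOn K univ :=
    eVariationOn.comp_le_of_antitoneOn K _ (fun _ _ _ _ huv => by gcongr) (mapsTo_univ _ _)
  have hriemann : |(m : ℝ)⁻¹ * (∑ j ∈ Finset.range m, g ((2 * (j : ℝ) + 1) / (2 * m)))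
      - ∫ w in (0:ℝ)..1, g w| ≤ (m : ℝ)⁻¹ * V :=
    (abs_midpoint_sum_sub_integral_le (ne_top_of_le_ne_top hKbv hgV) hm).trans
      (by gcongr; exact ENNReal.toReal_mono hKbv hgV)
  have hmass : |h⁻¹ * (∫ w in (0:ℝ)..1, g w) - 1| ≤ 2 * (M * E) :=
    abs_kernel_mass_sub_one_le hK0 hKint hK1 hKsymm hh hx
      (le_exp_of_gaussian_tail htail hM.le ha.le hδ hh hh₀)
  have hsplit : (m : ℝ)⁻¹ * (∑ j ∈ Finset.range m,
        K ((x - (2 * (j : ℝ) + 1) / (2 * m)) / h) / h) - 1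
      = h⁻¹ * ((m : ℝ)⁻¹ * (∑ j ∈ Finset.range m, g ((2 * (j : ℝ) + 1) / (2 * m)))
        - ∫ w in (0:ℝ)..1, g w) + (h⁻¹ * (∫ w in (0:ℝ)..1, g w) - 1) := by
    simp only [g, ← Finset.sum_div]
    ring
  have hV : 0 ≤ V := ENNReal.toReal_nonneg
  have hE : 0 < E := Real.exp_pos _
  rw [hsplit]
  calc _ ≤ h⁻¹ * ((m : ℝ)⁻¹ * V) + 2 * (M * E) := by
        refine (abs_add_le _ _).trans (add_le_add ?_ hmass)
        rw [abs_mul, abs_inv, abs_of_pos hh]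
        gcongr
    _ ≤ (V + 2 * M + 1) * (h⁻¹ * (m : ℝ)⁻¹ + E) := by
        have : 0 < h⁻¹ * (m : ℝ)⁻¹ := by positivity
        nlinarith

/-- kernel grid-average approximation, `q = 1`.  For a symmetric kernel
density `K` with bounded derivative, finite total variation, finite second moment and
Gaussian tails, and for the evenly spaced grid `w_j = (2j−1)/(2m)` on `[0,1]`, the grid
average of kernel weights is uniformly `1 + O(h⁻¹m⁻¹ + e^{−a'/h²})` on `[δ, 1−δ]`. -/
theorem statement10 (K : ℝ → ℝ)
    (hK0 : ∀ x, 0 ≤ K x) (hKint : Integrable K) (hK1 : (∫ x, K x) = 1)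
    (hKsymm : ∀ x, K (-x) = K x)
    (hKdiff : Differentiable ℝ K) (hKderiv : ∃ L, ∀ x, |deriv K x| ≤ L)
    (hKbv : BoundedVariationOn K univ)
    (hKm2 : Integrable (fun x => x ^ 2 * K x))
    (hKtail : ∃ M a y₀ : ℝ, 0 < M ∧ 0 < a ∧
      ∀ y : ℝ, y₀ ≤ y → (∫ x in Ioi y, K x) ≤ M * Real.exp (-a * y ^ 2)) :
    ∀ δ ∈ Ioo (0:ℝ) (1/2),
      ∃ C a' h₀ : ℝ, 0 < C ∧ 0 < a' ∧ 0 < h₀ ∧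
        ∀ h ∈ Ioo (0:ℝ) h₀, ∀ m : ℕ, 1 ≤ m → ∀ x ∈ Icc δ (1 - δ),
          |(m : ℝ)⁻¹ * (∑ j ∈ Finset.range m,
              K ((x - (2 * (j : ℝ) + 1) / (2 * m)) / h) / h) - 1|
            ≤ C * (h⁻¹ * (m : ℝ)⁻¹ + Real.exp (-a' / h ^ 2)) :=
  statement10_general K hK0 hKint hK1 hKsymm hKbv hKtail

end AHM
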